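/- Let P = (p_{xy}) be an m×n joint probability matrix and Q = (q_{xw}) an m×n' joint probability matrix, and let ρ_{XY} = Σ_{x,y} p_{xy} |x⟩⟨x| ⊗ |y⟩⟨y| and σ_{XY'} = Σ_{x,w} q_{xw} |x⟩⟨x| ⊗ |w⟩⟨w| be the corresponding diagonal bipartite density matrices. Then there exists a channel N ∈ CUSC(XY → XY') with σ_{XY'} = N(ρ_{XY}) if and only if there exist a row-stochastic n×n' matrix (t_{yw}) and doubly stochastic m×m matrices D_{(y,w)} (for y ∈ {1,…,n}, w ∈ {1,…,n'}) such that q_w = Σ_{y=1}^n t_{yw} D_{(y,w)} p_y for every w, where p_y ∈ ℝ^m and q_w ∈ ℝ^m denote the columns of P and Q. -/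

import Mathlib

open Matrix Kronecker
open scoped ComplexOrder

noncomputable section

open scoped Classical

/-- Square complex matrices of size `n`. -/
abbrev Mat (n : ℕ) := Matrix (Fin n) (Fin n) ℂ

/-- Bipartite matrices on `ℂ^a ⊗ ℂ^b`. -/
abbrev BMat (a b : ℕ) := Matrix (Fin a × Fin b) (Fin a × Fin b) ℂ

/-- A density matrix: positive semidefinite with trace one. -/
def IsDensity {ι : Type} [Fintype ι] (ρ : Matrix ι ι ℂ) : Prop :=
  ρ.PosSemidef ∧ ρ.trace = 1

/-- The maximally mixed state `I/n`. -/
def uMat (n : ℕ) : Mat n := (n : ℂ)⁻¹ • 1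

/-- Choi matrix of a map on matrices. -/
def choi {ι κ : Type} [Fintype ι] [DecidableEq ι]
    (Φ : Matrix ι ι ℂ → Matrix κ κ ℂ) : Matrix (ι × κ) (ι × κ) ℂ :=
  fun p q => Φ (Matrix.single p.1 q.1 1) p.2 q.2

/-- Quantum channel: linear, trace preserving, completely positive map. -/
def IsCPTP {ι κ : Type} [Fintype ι] [DecidableEq ι] [Fintype κ]
    (Φ : Matrix ι ι ℂ → Matrix κ κ ℂ) : Prop :=
  IsLinearMap ℂ Φ ∧ (∀ X, (Φ X).trace = X.trace) ∧ (choi Φ).PosSemidef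

/-- Completely positive (not necessarily trace-preserving) map. -/
def IsCP {ι κ : Type} [Fintype ι] [DecidableEq ι] [Fintype κ]
    (Φ : Matrix ι ι ℂ → Matrix κ κ ℂ) : Prop :=
  IsLinearMap ℂ Φ ∧ (choi Φ).PosSemidef

/-- Partial trace over the first tensor factor. -/
def ptraceA {α β : Type} [Fintype α] (M : Matrix (α × β) (α × β) ℂ) :
    Matrix β β ℂ := fun j j' => ∑ i, M (i, j) (i, j')

/-- Partial trace over the second tensor factor. -/
def ptraceB {α β : Type} [Fintype β] (M : Matrix (α × β) (α × β) ℂ) :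
    Matrix α α ℂ := fun i i' => ∑ j, M (i, j) (i', j)

/-- The map `Φ ⊗ id` acting on the first tensor factor. -/
def lTensorId {α α' β : Type} (Φ : Matrix α α ℂ → Matrix α' α' ℂ)
    (X : Matrix (α × β) (α × β) ℂ) : Matrix (α' × β) (α' × β) ℂ :=
  fun p q => Φ (fun k k' => X (k, p.2) (k', q.2)) p.1 q.1

/-- The map `id ⊗ Φ` acting on the second tensor factor. -/
def rTensorId {α β β' : Type} (Φ : Matrix β β ℂ → Matrix β' β' ℂ)
    (X : Matrix (α × β) (α × β) ℂ) : Matrix (α × β') (α × β') ℂ :=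
  fun p q => Φ (fun k k' => X (p.1, k) (q.1, k')) p.2 q.2

/-- `A ↛ B'` semi-causality of a bipartite channel. -/
def SemiCausal {a b b' : ℕ} (N : BMat a b → BMat a b') : Prop :=
  ∀ M : Mat a → Mat a, IsCPTP M →
    ∀ X : BMat a b, ptraceA (N (lTensorId M X)) = ptraceA (N X)

/-- Conditional unitality of a bipartite channel. -/
def CondUnital {a b b' : ℕ} (N : BMat a b → BMat a b') : Prop :=
  ∀ ρ : Mat b, IsDensity ρ →
    ∃ σ : Mat b', IsDensity σ ∧ N (uMat a ⊗ₖ ρ) = uMat a ⊗ₖ σ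

/-- Conditionally unital semi-causal channels. -/
def CUSC {a b b' : ℕ} (N : BMat a b → BMat a b') : Prop :=
  IsCPTP N ∧ CondUnital N ∧ SemiCausal N

/-- The channel `X ↦ V X V†` associated with a matrix `V`. -/
def isomChannel {a a' : ℕ} (V : Matrix (Fin a') (Fin a) ℂ) (X : Mat a) : Mat a' :=
  V * X * Vᴴ

/-- Conditional majorization `σ ≾_A ρ`. -/
def CondMajor {a' b' a b : ℕ} (σ : BMat a' b') (ρ : BMat a b) : Prop :=
  (a ≤ a' ∧ ∃ V : Matrix (Fin a') (Fin a) ℂ, Vᴴ * V = 1 ∧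
      ∃ N : BMat a b → BMat a b', CUSC N ∧ σ = lTensorId (isomChannel V) (N ρ)) ∨
  (a' ≤ a ∧ ∃ U : Matrix (Fin a) (Fin a') ℂ, Uᴴ * U = 1 ∧
      ∃ N : BMat a b → BMat a b', CUSC N ∧ lTensorId (isomChannel U) σ = N ρ)

/-- The tensor product `ρ_{AB} ⊗ τ_{A'B'}` regrouped as a state on `(AA')(BB')`. -/
def prodState {a b a' b' : ℕ} (ρ : BMat a b) (τ : BMat a' b') :
    BMat (a * a') (b * b') := fun p q =>
  ρ ((finProdFinEquiv.symm p.1).1, (finProdFinEquiv.symm p.2).1)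
    ((finProdFinEquiv.symm q.1).1, (finProdFinEquiv.symm q.2).1) *
  τ ((finProdFinEquiv.symm p.1).2, (finProdFinEquiv.symm p.2).2)
    ((finProdFinEquiv.symm q.1).2, (finProdFinEquiv.symm q.2).2)

/-- A conditional entropy: a real function on bipartite density matrices of all
finite dimensions, monotone under conditional majorization, additive under tensor
products, and normalized to `1` on the one-qubit maximally mixed state. -/
structure CondEntropy where
  H : ∀ {a b : ℕ}, BMat a b → ℝ
  mono : ∀ {a b a' b' : ℕ} (ρ : BMat a b) (σ : BMat a' b'),
    IsDensity ρ → IsDensity σ → CondMajor σ ρ → H ρ ≤ H σ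
  additive : ∀ {a b a' b' : ℕ} (ρ : BMat a b) (τ : BMat a' b'),
    IsDensity ρ → IsDensity τ → H (prodState ρ τ) = H ρ + H τ
  normalized : H (uMat 2 ⊗ₖ (1 : Mat 1)) = 1

/-- Maximally entangled state `φ⁺` on `ℂ^d ⊗ ℂ^d`. -/
def maxEnt (d : ℕ) : BMat d d :=
  fun p q => if p.1 = p.2 ∧ q.1 = q.2 then (d : ℂ)⁻¹ else 0

/-- The sum of the `k` largest values of `f`. -/
def sumTopK {ι : Type} [Fintype ι] [DecidableEq ι] (k : ℕ) (f : ι → ℝ) : ℝ :=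
  (Finset.univ.powerset.filter fun s : Finset ι => s.card ≤ k).sup'
    ⟨∅, Finset.mem_filter.mpr ⟨Finset.mem_powerset.mpr (Finset.empty_subset _), by simp⟩⟩
    fun s => ∑ i ∈ s, f i

/-- Ky Fan `k`-norm (sum of the `k` largest eigenvalues) of a hermitian matrix. -/
def kyFan {ι : Type} [Fintype ι] [DecidableEq ι] (k : ℕ) (X : Matrix ι ι ℂ) : ℝ :=
  if h : X.IsHermitian then sumTopK k h.eigenvalues else 0

/-- The rank-one projector `|v⟩⟨v|`. -/
def projv {n : ℕ} (v : Fin n → ℂ) : Mat n := fun i j => v i * star (v j)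

/-- A rank-one projective measurement, given by an orthonormal family of vectors. -/
def IsRankOneMeas {n : ℕ} (u : Fin n → Fin n → ℂ) : Prop :=
  ∀ z z', (∑ i, star (u z i) * u z' i) = if z = z' then 1 else 0

/-- A column-stochastic matrix. -/
def ColStochastic {a c : ℕ} (T : Matrix (Fin a) (Fin c) ℝ) : Prop :=
  (∀ w z, 0 ≤ T w z) ∧ ∀ z, ∑ w, T w z = 1

/-- Reward of the bipartite gambling game `(T, 0)` (no adversary). -/
def R0 {a b c : ℕ} (T : Matrix (Fin a) (Fin c) ℝ) (ρ : BMat a b) : ℝ :=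
  ⨆ u : {u : Fin b → Fin b → ℂ // IsRankOneMeas u}, ⨆ f : Fin b → Fin c,
    ∑ z, ∑ w, T w (f z) *
      kyFan (w.1 + 1)
        (ptraceB (((1 : Mat a) ⊗ₖ projv (u.1 z)) * ρ * ((1 : Mat a) ⊗ₖ projv (u.1 z))))

/-- Reward of the bipartite gambling game `(T, p)`. -/
def Rgame {a b c : ℕ} (T : Matrix (Fin a) (Fin c) ℝ) (p : ℝ) (ρ : BMat a b) : ℝ :=
  p * (⨅ v : {v : Fin a → Fin a → ℂ // IsRankOneMeas v},
        R0 T (∑ j, (projv (v.1 j) ⊗ₖ (1 : Mat b)) * ρ * (projv (v.1 j) ⊗ₖ (1 : Mat b)))) +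
  (1 - p) * R0 T ρ

/-- Reward of a quantum-channel gambling game `ρ_{ABX} = Σ_x p_x ρ^{(x)}_{AB} ⊗ |x⟩⟨x|`
for a channel `N` with output system `A`. -/
def Rch {n m dA b ℓ : ℕ} (N : Mat n → Mat m)
    (p : Fin ℓ → ℝ) (ρx : Fin ℓ → BMat dA b) : ℝ :=
  ⨆ E : {E : Mat dA → Mat n // IsCPTP E},
    ∑ x, p x * kyFan (x.1 + 1) (lTensorId (fun Y => N (E.1 Y)) (ρx x))

/-- The classical channel induced by a column-stochastic transition matrix. -/
def classicalChannel {x y : ℕ} (P : Matrix (Fin y) (Fin x) ℝ) : Mat x → Mat y :=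
  fun ρ => Matrix.of fun i j => if i = j then ∑ k, (P i k : ℂ) * ρ k k else 0

/-- Classical game reward `Prob_T` of a classical channel with transition matrix `P`. -/
def ProbT {yd xd wn zn : ℕ} (P : Matrix (Fin yd) (Fin xd) ℝ)
    (T : Matrix (Fin wn) (Fin zn) ℝ) : ℝ :=
  ∑ z, ⨆ x : Fin xd, ∑ w, T w z * sumTopK (w.1 + 1) (fun i => P i x)

/-- A joint probability matrix. -/
def JointProb {m n : ℕ} (P : Matrix (Fin m) (Fin n) ℝ) : Prop :=
  (∀ x y, 0 ≤ P x y) ∧ ∑ x, ∑ y, P x y = 1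

/-- A row-stochastic matrix. -/
def RowStochastic {n n' : ℕ} (t : Matrix (Fin n) (Fin n') ℝ) : Prop :=
  (∀ y w, 0 ≤ t y w) ∧ ∀ y, ∑ w, t y w = 1

/-- A doubly stochastic matrix. -/
def IsDoublyStochastic {m : ℕ} (d : Matrix (Fin m) (Fin m) ℝ) : Prop :=
  (∀ i j, 0 ≤ d i j) ∧ (∀ i, ∑ j, d i j = 1) ∧ (∀ j, ∑ i, d i j = 1)

/-- The quantum channel induced by a (doubly) stochastic matrix. -/
def dsChannel {m : ℕ} (d : Matrix (Fin m) (Fin m) ℝ) : Mat m → Mat m :=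
  fun ρ => Matrix.of fun x x' => if x = x' then ∑ y, (d x y : ℂ) * ρ y y else 0

/-- Diagonal bipartite state associated with a joint probability matrix. -/
def classicalState {m n : ℕ} (P : Matrix (Fin m) (Fin n) ℝ) : BMat m n :=
  Matrix.of fun p q => if p = q then (P p.1 p.2 : ℂ) else 0

/-- von Neumann entropy `S(ρ) = -Σ λ_i log₂ λ_i`. -/
def vnEntropy {ι : Type} [Fintype ι] [DecidableEq ι] (ρ : Matrix ι ι ℂ) : ℝ :=
  if h : ρ.IsHermitian then -∑ i, h.eigenvalues i * Real.logb 2 (h.eigenvalues i) else 0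

/-- von Neumann conditional entropy `H(A|B) = S(ρ_AB) - S(ρ_B)`. -/
def condVN {a b : ℕ} (ρ : BMat a b) : ℝ := vnEntropy ρ - vnEntropy (ptraceA ρ)

/-- Classical game reward for a classical bipartite state with joint distribution `q`
(`y` on `A`, `z` on `B`). -/
def ProbTstate {a b c : ℕ} (T : Matrix (Fin a) (Fin c) ℝ)
    (q : Matrix (Fin a) (Fin b) ℝ) : ℝ :=
  ∑ z, ⨆ z' : Fin c, ∑ w, T w z' * sumTopK (w.1 + 1) (fun y => q y z)

/-!
Restricted to diagonal inputs and outputs, a channel `N` on `XY → XY'` is the classical kernel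
`c((x,w) | (x',y)) = ⟨x w| N(|x' y⟩⟨x' y|) |x w⟩`, which is nonnegative by complete positivity.
Conditional unitality, tested on `u_X ⊗ |y⟩⟨y|`, says that `∑_{x'} c((x,w) | (x',y)) = t(w|y)`
for a row-stochastic `t` independent of `x`; semi-causality, tested against the replacement
channels `A ↦ tr(A) |x'⟩⟨x'|` on `X`, says that `∑_x c((x,w) | (x',y))` does not depend on `x'`.
So every block `c((·,w) | (·,y))` is `t(w|y)` times a doubly stochastic matrix. Conversely, the
diagonal channel with kernel `t(w|y) D_{(y,w)}(x,x')` is conditionally unital and semi-causal.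
-/

theorem Complex.ofReal_re_of_nonneg {z : ℂ} (hz : 0 ≤ z) : (z.re : ℂ) = z :=
  (Complex.eq_re_of_ofReal_le (r := 0) (by simpa using hz)).symm

theorem isDensity_single {ι : Type} [Fintype ι] [DecidableEq ι] (i : ι) :
    IsDensity (single i i (1 : ℂ)) := by
  refine ⟨?_, trace_single_eq_same i 1⟩
  rw [← diagonal_single, posSemidef_diagonal_iff]
  intro j
  by_cases h : j = i <;> simp [h]

theorem uMat_eq_diagonal (m : ℕ) : uMat m = diagonal fun _ => (m : ℂ)⁻¹ :=
  smul_one_eq_diagonal _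

theorem classicalState_eq_diagonal {m n : ℕ} (P : Matrix (Fin m) (Fin n) ℝ) :
    classicalState P = diagonal fun r => (P r.1 r.2 : ℂ) :=
  rfl

section KernelChannel

variable {ι κ : Type} [Fintype ι] [DecidableEq κ]

def kernelChannel (K : Matrix κ ι ℝ) (X : Matrix ι ι ℂ) : Matrix κ κ ℂ :=
  diagonal (K.map Complex.ofReal *ᵥ X.diag)

theorem kernelChannel_diagonal [DecidableEq ι] (K : Matrix κ ι ℝ) (d : ι → ℂ) :
    kernelChannel K (diagonal d) = diagonal (K.map Complex.ofReal *ᵥ d) := by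
  rw [kernelChannel, diag_diagonal]

theorem isLinearMap_kernelChannel (K : Matrix κ ι ℝ) : IsLinearMap ℂ (kernelChannel K) :=
  (diagonalLinearMap κ ℂ ℂ ∘ₗ (K.map Complex.ofReal).mulVecLin ∘ₗ diagLinearMap ι ℂ ℂ).isLinear

theorem trace_kernelChannel [Fintype κ] {K : Matrix κ ι ℝ} (hK : ∀ r, ∑ p, K p r = 1)
    (X : Matrix ι ι ℂ) : (kernelChannel K X).trace = X.trace := by
  simp only [kernelChannel, trace_diagonal, mulVec, dotProduct, map_apply]
  rw [Finset.sum_comm]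
  refine Finset.sum_congr rfl fun r _ => ?_
  rw [← Finset.sum_mul, ← Complex.ofReal_sum, hK r, Complex.ofReal_one, one_mul, diag_apply]

theorem choi_kernelChannel [DecidableEq ι] (K : Matrix κ ι ℝ) :
    choi (kernelChannel K) = diagonal fun q => (K q.2 q.1 : ℂ) := by
  ext ⟨i, p⟩ ⟨j, q⟩
  by_cases hpq : p = q <;> by_cases hij : i = j <;>
    simp [choi, kernelChannel, hpq, hij]

theorem isCPTP_kernelChannel [DecidableEq ι] [Fintype κ] {K : Matrix κ ι ℝ} (hK₀ : ∀ p r, 0 ≤ K p r)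
    (hK₁ : ∀ r, ∑ p, K p r = 1) : IsCPTP (kernelChannel K) := by
  refine ⟨isLinearMap_kernelChannel K, trace_kernelChannel hK₁, ?_⟩
  rw [choi_kernelChannel, posSemidef_diagonal_iff]
  exact fun q => by exact_mod_cast hK₀ q.2 q.1

theorem IsDensity.kernelChannel [Fintype κ] {ρ : Matrix ι ι ℂ} (hρ : IsDensity ρ) {K : Matrix κ ι ℝ}
    (hK₀ : ∀ p r, 0 ≤ K p r) (hK₁ : ∀ r, ∑ p, K p r = 1) :
    IsDensity (kernelChannel K ρ) := by
  refine ⟨?_, (trace_kernelChannel hK₁ ρ).trans hρ.2⟩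
  rw [_root_.kernelChannel, posSemidef_diagonal_iff]
  exact fun p => Finset.sum_nonneg fun r _ =>
    mul_nonneg (Complex.zero_le_real.mpr (hK₀ p r)) hρ.1.diag_nonneg

end KernelChannel

theorem ptraceA_lTensorId {α β : Type} [Fintype α] {M : Matrix α α ℂ → Matrix α α ℂ}
    (hM : ∀ X, (M X).trace = X.trace) (X : Matrix (α × β) (α × β) ℂ) :
    ptraceA (lTensorId M X) = ptraceA X := by
  ext j j'
  exact hM fun k k' => X (k, j) (k', j')

theorem ptraceA_single {α β : Type} [Fintype α] [DecidableEq α] [DecidableEq β]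
    (i : α) (j j' : β) (c : ℂ) : ptraceA (single (i, j) (i, j') c) = single j j' c := by
  ext k k'
  by_cases h : j = k ∧ j' = k' <;> simp_all [ptraceA, single_apply]

theorem lTensorId_traceSMul {α α' β : Type} [Fintype α] (ω : Matrix α' α' ℂ)
    (X : Matrix (α × β) (α × β) ℂ) :
    lTensorId (fun A : Matrix α α ℂ => A.trace • ω) X = ω ⊗ₖ ptraceA X := by
  ext p q
  simp only [lTensorId, Matrix.smul_apply, smul_eq_mul, kroneckerMap_apply, ptraceA]
  exact mul_comm _ _

theorem isCPTP_traceSMul {ι κ : Type} [Fintype ι] [DecidableEq ι] [Fintype κ]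
    {ω : Matrix κ κ ℂ} (hω : IsDensity ω) : IsCPTP fun A : Matrix ι ι ℂ => A.trace • ω := by
  refine ⟨⟨fun A B => by rw [trace_add, add_smul], fun c A => by rw [trace_smul, smul_assoc]⟩,
    fun A => by rw [trace_smul, hω.2, smul_eq_mul, mul_one], ?_⟩
  have hchoi : choi (fun A : Matrix ι ι ℂ => A.trace • ω) = 1 ⊗ₖ ω := by
    ext ⟨i, p⟩ ⟨j, q⟩
    by_cases hij : i = j
    · simp [choi, hij, trace_single_eq_same]
    · simp [choi, hij, trace_single_eq_of_ne]
  rw [hchoi]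
  exact PosSemidef.one.kronecker hω.1

section Bipartite

variable {α β β' : Type} [Fintype α] [Fintype β] [DecidableEq β']

theorem ptraceA_kernelChannel [DecidableEq α] {K : Matrix (α × β') (α × β) ℝ}
    {t : Matrix β β' ℝ} (hK : ∀ w r, ∑ x, K (x, w) r = t r.2 w)
    (X : Matrix (α × β) (α × β) ℂ) :
    ptraceA (kernelChannel K X) = kernelChannel tᵀ (ptraceA X) := by
  ext w w'
  by_cases hw : w = w'
  · subst hw
    simp only [ptraceA, kernelChannel, diagonal_apply_eq, mulVec, dotProduct, map_apply,
      diag_apply, transpose_apply]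
    rw [Finset.sum_comm, Fintype.sum_prod_type, Finset.sum_comm]
    refine Finset.sum_congr rfl fun y _ => ?_
    simp_rw [Finset.mul_sum, ← Finset.sum_mul, ← Complex.ofReal_sum]
    exact Finset.sum_congr rfl fun x _ => by rw [hK]
  · simp [ptraceA, kernelChannel, hw]

theorem semiCausal_kernelChannel {a b b' : ℕ} {K : Matrix (Fin a × Fin b') (Fin a × Fin b) ℝ}
    {t : Matrix (Fin b) (Fin b') ℝ} (hK : ∀ w r, ∑ x, K (x, w) r = t r.2 w) :
    SemiCausal (kernelChannel K) := fun M hM X => by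
  rw [ptraceA_kernelChannel hK, ptraceA_kernelChannel hK, ptraceA_lTensorId hM.2.1]

end Bipartite

theorem kernelChannel_uMat_kronecker {a b b' : ℕ}
    {K : Matrix (Fin a × Fin b') (Fin a × Fin b) ℝ} {t : Matrix (Fin b) (Fin b') ℝ}
    (hK : ∀ x w y, ∑ x' : Fin a, K (x, w) (x', y) = t y w) (ρ : Mat b) :
    kernelChannel K (uMat a ⊗ₖ ρ) = uMat a ⊗ₖ kernelChannel tᵀ ρ := by
  rw [kernelChannel, kernelChannel, uMat_eq_diagonal, diagonal_kronecker_diagonal]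
  refine congrArg diagonal (funext fun ⟨x, w⟩ => ?_)
  simp only [mulVec, dotProduct, map_apply, diag_apply, kroneckerMap_apply, diagonal_apply_eq,
    transpose_apply, Fintype.sum_prod_type, Finset.mul_sum]
  rw [Finset.sum_comm]
  refine Finset.sum_congr rfl fun y _ => ?_
  rw [← Finset.sum_mul, ← Complex.ofReal_sum, hK]
  ring

theorem condUnital_kernelChannel {a b b' : ℕ}
    {K : Matrix (Fin a × Fin b') (Fin a × Fin b) ℝ} {t : Matrix (Fin b) (Fin b') ℝ}
    (ht : RowStochastic t) (hK : ∀ x w y, ∑ x' : Fin a, K (x, w) (x', y) = t y w) :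
    CondUnital (kernelChannel K) := fun ρ hρ =>
  ⟨kernelChannel tᵀ ρ, hρ.kernelChannel (fun w y => ht.1 y w) ht.2,
    kernelChannel_uMat_kronecker hK ρ⟩

def blockKernel {m n n' : ℕ} (t : Matrix (Fin n) (Fin n') ℝ)
    (D : Fin n → Fin n' → Matrix (Fin m) (Fin m) ℝ) :
    Matrix (Fin m × Fin n') (Fin m × Fin n) ℝ :=
  fun p r => t r.2 p.2 * D r.2 p.2 p.1 r.1

section BlockKernel

variable {m n n' : ℕ} {t : Matrix (Fin n) (Fin n') ℝ}
  {D : Fin n → Fin n' → Matrix (Fin m) (Fin m) ℝ}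

theorem blockKernel_sum_left (hD : ∀ y w, IsDoublyStochastic (D y w)) (w : Fin n')
    (r : Fin m × Fin n) : ∑ x, blockKernel t D (x, w) r = t r.2 w := by
  simp only [blockKernel, ← Finset.mul_sum, (hD r.2 w).2.2, mul_one]

theorem blockKernel_sum_right (hD : ∀ y w, IsDoublyStochastic (D y w)) (x : Fin m)
    (w : Fin n') (y : Fin n) : ∑ x', blockKernel t D (x, w) (x', y) = t y w := by
  simp only [blockKernel, ← Finset.mul_sum, (hD y w).2.1, mul_one]

theorem cusc_kernelChannel_blockKernel (ht : RowStochastic t)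
    (hD : ∀ y w, IsDoublyStochastic (D y w)) : CUSC (kernelChannel (blockKernel t D)) := by
  refine ⟨isCPTP_kernelChannel (fun p r => mul_nonneg (ht.1 _ _) ((hD _ _).1 _ _)) fun r => ?_,
    condUnital_kernelChannel ht (blockKernel_sum_right hD),
    semiCausal_kernelChannel (blockKernel_sum_left hD)⟩
  rw [Fintype.sum_prod_type_right]
  simp only [blockKernel_sum_left hD, ht.2]

end BlockKernel

theorem mulVec_blockKernel {m n n' : ℕ} (t : Matrix (Fin n) (Fin n') ℝ)
    (D : Fin n → Fin n' → Matrix (Fin m) (Fin m) ℝ) (P : Matrix (Fin m) (Fin n) ℝ) :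
    (blockKernel t D).map Complex.ofReal *ᵥ (fun r => (P r.1 r.2 : ℂ)) =
      fun p => ((∑ y, t y p.2 * ∑ x', D y p.2 p.1 x' * P x' y : ℝ) : ℂ) := by
  ext ⟨x, w⟩
  simp only [mulVec, dotProduct, map_apply, blockKernel, Fintype.sum_prod_type_right,
    Finset.mul_sum]
  push_cast
  simp only [mul_assoc]

section DiagKernel

variable {ι κ : Type} [Fintype ι] [DecidableEq ι] {Φ : Matrix ι ι ℂ → Matrix κ κ ℂ}

def diagKernel (Φ : Matrix ι ι ℂ → Matrix κ κ ℂ) : Matrix κ ι ℝ :=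
  fun p r => (Φ (single r r 1) p p).re

theorem diagKernel_nonneg (hΦ : (choi Φ).PosSemidef) (p : κ) (r : ι) :
    0 ≤ diagKernel Φ p r :=
  (Complex.nonneg_iff.1 (hΦ.diag_nonneg (i := (r, p)))).1

theorem ofReal_diagKernel (hΦ : (choi Φ).PosSemidef) (p : κ) (r : ι) :
    (diagKernel Φ p r : ℂ) = Φ (single r r 1) p p :=
  Complex.ofReal_re_of_nonneg (hΦ.diag_nonneg (i := (r, p)))

theorem diag_apply_diagonal (hlin : IsLinearMap ℂ Φ) (hΦ : (choi Φ).PosSemidef) (d : ι → ℂ) :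
    (Φ (diagonal d)).diag = (diagKernel Φ).map Complex.ofReal *ᵥ d := by
  have hsingle (r : ι) : single r r (d r) = d r • single r r 1 := by
    rw [smul_single, smul_eq_mul, mul_one]
  ext p
  simp only [diag_apply, mulVec, dotProduct, map_apply, ofReal_diagKernel hΦ]
  rw [← sum_single_eq_diagonal, ← IsLinearMap.mk'_apply hlin, map_sum]
  simp only [hsingle, map_smul, IsLinearMap.mk'_apply, Matrix.sum_apply, Matrix.smul_apply,
    smul_eq_mul, mul_comm]

end DiagKernel

theorem CondUnital.exists_rowStochastic_diagKernel {a b b' : ℕ} {N : BMat a b → BMat a b'}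
    (hN : CondUnital N) (hlin : IsLinearMap ℂ N) (hN₀ : (choi N).PosSemidef) :
    ∃ t : Matrix (Fin b) (Fin b') ℝ, RowStochastic t ∧
      ∀ x w y, ∑ x' : Fin a, diagKernel N (x, w) (x', y) = t y w := by
  choose σ hσ hNσ using fun y : Fin b => hN _ (isDensity_single y)
  refine ⟨fun y w => (σ y w w).re,
    ⟨fun y w => (Complex.nonneg_iff.1 (hσ y).1.diag_nonneg).1, fun y => ?_⟩, fun x w y => ?_⟩
  · rw [← Complex.re_sum]
    exact congrArg Complex.re (hσ y).2
  · have h := congrFun (congrArg diag (hNσ y)) (x, w)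
    rw [← diagonal_single, uMat_eq_diagonal, diagonal_kronecker_diagonal,
      diag_apply_diagonal hlin hN₀] at h
    simp only [mulVec, dotProduct, map_apply, Pi.single_apply, mul_ite, mul_one, mul_zero,
      Fintype.sum_prod_type, Finset.sum_ite_eq', Finset.mem_univ, ↓reduceIte, diag_apply,
      kroneckerMap_apply, diagonal_apply_eq] at h
    rw [← Finset.sum_mul, mul_comm] at h
    have ha : (a : ℂ)⁻¹ ≠ 0 := inv_ne_zero (Nat.cast_ne_zero.2 (Fin.pos x).ne')
    simpa using congrArg Complex.re (mul_left_cancel₀ ha h)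

theorem SemiCausal.sum_diagKernel_eq {a b b' : ℕ} {N : BMat a b → BMat a b'}
    (hN : SemiCausal N) (hN₀ : (choi N).PosSemidef) (w : Fin b') (y : Fin b) (x' x'' : Fin a) :
    ∑ x, diagKernel N (x, w) (x', y) = ∑ x, diagKernel N (x, w) (x'', y) := by
  have h := congrFun (congrFun
    (hN _ (isCPTP_traceSMul (isDensity_single x')) (single (x'', y) (x'', y) 1)) w) w
  rw [lTensorId_traceSMul, ptraceA_single, single_kronecker_single, mul_one] at h
  simp only [ptraceA, ← ofReal_diagKernel hN₀] at h
  exact_mod_cast h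

theorem exists_isDoublyStochastic_eq_smul {m : ℕ} {C : Matrix (Fin m) (Fin m) ℝ} {s : ℝ}
    (hs : 0 ≤ s) (hC : ∀ i j, 0 ≤ C i j) (hrow : ∀ i, ∑ j, C i j = s)
    (hcol : ∀ j j', ∑ i, C i j = ∑ i, C i j') :
    ∃ D, IsDoublyStochastic D ∧ C = s • D := by
  have hcol' (j : Fin m) : ∑ i, C i j = s := by
    refine mul_left_cancel₀ (Nat.cast_ne_zero.2 (Fin.pos j).ne' : (m : ℝ) ≠ 0) ?_
    calc (m : ℝ) * ∑ i, C i j = ∑ j', ∑ i, C i j' := by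
          rw [Finset.sum_congr rfl fun j' _ => (hcol j j').symm, Finset.sum_const,
            Finset.card_univ, Fintype.card_fin, nsmul_eq_mul]
      _ = ∑ i, ∑ j', C i j' := Finset.sum_comm
      _ = m * s := by simp [hrow]
  obtain ⟨D, hD, rfl⟩ := (exists_mem_doublyStochastic_eq_smul_iff hs).2 ⟨hC, hrow, hcol'⟩
  exact ⟨D, mem_doublyStochastic_iff_sum.1 hD, rfl⟩

theorem CUSC.exists_diagKernel_eq_blockKernel {a b b' : ℕ} {N : BMat a b → BMat a b'}
    (hN : CUSC N) : ∃ t : Matrix (Fin b) (Fin b') ℝ, RowStochastic t ∧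
      ∃ D : Fin b → Fin b' → Matrix (Fin a) (Fin a) ℝ,
        (∀ y w, IsDoublyStochastic (D y w)) ∧ diagKernel N = blockKernel t D := by
  obtain ⟨⟨hlin, -, hN₀⟩, hCU, hSC⟩ := hN
  obtain ⟨t, ht, hrow⟩ := hCU.exists_rowStochastic_diagKernel hlin hN₀
  have hblock (y : Fin b) (w : Fin b') : ∃ D, IsDoublyStochastic D ∧
      (of fun x x' => diagKernel N (x, w) (x', y)) = t y w • D :=
    exists_isDoublyStochastic_eq_smul (ht.1 y w) (fun _ _ => diagKernel_nonneg hN₀ _ _)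
      (fun x => hrow x w y) (hSC.sum_diagKernel_eq hN₀ w y)
  choose D hD hND using hblock
  refine ⟨t, ht, D, hD, ?_⟩
  ext ⟨x, w⟩ ⟨x', y⟩
  exact congrFun₂ (hND y w) x x'

theorem classical_reduction_general {m n n' : ℕ}
    (P : Matrix (Fin m) (Fin n) ℝ) (Q : Matrix (Fin m) (Fin n') ℝ) :
    (∃ N : BMat m n → BMat m n', CUSC N ∧ classicalState Q = N (classicalState P)) ↔
      (∃ t : Matrix (Fin n) (Fin n') ℝ, RowStochastic t ∧
        ∃ Dm : Fin n → Fin n' → Matrix (Fin m) (Fin m) ℝ,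
          (∀ y w, IsDoublyStochastic (Dm y w)) ∧
          ∀ (w : Fin n') (x : Fin m),
            Q x w = ∑ y, t y w * ∑ x', Dm y w x x' * P x' y) := by
  constructor
  · rintro ⟨N, hN, hQP⟩
    obtain ⟨t, ht, D, hD, hND⟩ := hN.exists_diagKernel_eq_blockKernel
    refine ⟨t, ht, D, hD, fun w x => ?_⟩
    have h := congrFun (congrArg diag hQP) (x, w)
    rw [classicalState_eq_diagonal, classicalState_eq_diagonal, diag_diagonal,
      diag_apply_diagonal hN.1.1 hN.1.2.2, hND, mulVec_blockKernel] at h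
    exact Complex.ofReal_injective h
  · rintro ⟨t, ht, D, hD, hQ⟩
    refine ⟨_, cusc_kernelChannel_blockKernel ht hD, ?_⟩
    rw [classicalState_eq_diagonal, classicalState_eq_diagonal, kernelChannel_diagonal,
      mulVec_blockKernel]
    exact congrArg diagonal (funext fun p => congrArg _ (hQ p.2 p.1))

/-- quantum conditional majorization reduces to classical conditional
majorization on classical states. -/
theorem classical_reduction {m n n' : ℕ}
    (P : Matrix (Fin m) (Fin n) ℝ) (Q : Matrix (Fin m) (Fin n') ℝ)
    (hP : JointProb P) (hQ : JointProb Q) :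
    (∃ N : BMat m n → BMat m n', CUSC N ∧ classicalState Q = N (classicalState P)) ↔
      (∃ t : Matrix (Fin n) (Fin n') ℝ, RowStochastic t ∧
        ∃ Dm : Fin n → Fin n' → Matrix (Fin m) (Fin m) ℝ,
          (∀ y w, IsDoublyStochastic (Dm y w)) ∧
          ∀ (w : Fin n') (x : Fin m),
            Q x w = ∑ y, t y w * ∑ x', Dm y w x x' * P x' y) :=
  classical_reduction_general P Q

end
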